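/- Let H be a Hopf algebra over a field k and F an invertible element of H⊗H satisfying the 2-cocycle condition (F⊗1)·(Δ⊗id)(F) = (1⊗F)·(id⊗Δ)(F) and the counital condition (ε⊗id)(F) = 1 = (id⊗ε)(F). Then H with the same algebra structure, coproduct Δ_F(h) = F·Δ(h)·F⁻¹, the same counit, and antipode S_F(h) = U·S(h)·U⁻¹ where U = F₁·S(F₂) (with F = F₁⊗F₂, summation understood), is again a Hopf algebra. -/

import Mathlib

open TensorProduct LinearMap

noncomputable section

variable (k : Type) [Field k]
variable (H : Type) [Ring H] [HopfAlgebra k H]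

/-- `F`, with inverse `Finv`, is a counital 2-cocycle on the Hopf algebra `H`:
`(F⊗1)·(Δ⊗id)(F) = (1⊗F)·(id⊗Δ)(F)` and `(ε⊗id)(F) = 1 = (id⊗ε)(F)`. -/
def IsCocycle (F Finv : H ⊗[k] H) : Prop :=
  F * Finv = 1 ∧ Finv * F = 1 ∧
  (F ⊗ₜ[k] (1 : H)) * (TensorProduct.map Coalgebra.comul LinearMap.id F) =
    (TensorProduct.assoc k H H H).symm
      (((1 : H) ⊗ₜ[k] F) * (TensorProduct.map LinearMap.id Coalgebra.comul F)) ∧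
  TensorProduct.map Coalgebra.counit LinearMap.id F = 1 ∧
  TensorProduct.map LinearMap.id Coalgebra.counit F = 1

/-- A (left) module-algebra structure of a Hopf algebra `H` on an algebra `A`:
`A` is an algebra object in the category of `H`-modules. -/
structure ModuleAlgebra (A : Type) [Ring A] [Algebra k A] where
  act : H →ₗ[k] Module.End k A
  act_one : act 1 = 1
  act_mul : ∀ g h : H, act (g * h) = act g * act h
  act_algebra_unit : ∀ h : H, act h (1 : A) = (Coalgebra.counit h : k) • (1 : A)
  act_algebra_mul : ∀ (h : H) (a b : A),
    act h (a * b) = LinearMap.mul' k A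
      ((TensorProduct.homTensorHomMap (RingHom.id k) A A A A
        (TensorProduct.map act act (Coalgebra.comul h))) (a ⊗ₜ[k] b))

variable {k H}

/-- The operator on `A ⊗ B` obtained by letting an element `x ∈ H ⊗ H` act
legwise through the actions `actA`, `actB`. -/
def legAct {A B : Type} [AddCommGroup A] [Module k A] [AddCommGroup B] [Module k B]
    (actA : H →ₗ[k] Module.End k A) (actB : H →ₗ[k] Module.End k B) (x : H ⊗[k] H) :
    A ⊗[k] B →ₗ[k] A ⊗[k] B :=
  TensorProduct.homTensorHomMap (RingHom.id k) A B A B (TensorProduct.map actA actB x)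

/-- The twisted product `m_F = m ∘ (F⁻¹ ▷ −)` on `A`. -/
def twistedMul {A : Type} [Ring A] [Algebra k A] (ma : ModuleAlgebra k H A)
    (Finv : H ⊗[k] H) : A ⊗[k] A →ₗ[k] A :=
  LinearMap.mul' k A ∘ₗ legAct ma.act ma.act Finv

/-- The twisted coproduct `Δ_F(h) = F·Δ(h)·F⁻¹`. -/
def twistedComul (F Finv : H ⊗[k] H) : H →ₗ[k] H ⊗[k] H :=
  LinearMap.mulLeft k F ∘ₗ LinearMap.mulRight k Finv ∘ₗ Coalgebra.comul


/-- The element `U = F₁·S(F₂)` (summation understood). -/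
def twistU (F : H ⊗[k] H) : H :=
  LinearMap.mul' k H ((HopfAlgebra.antipode (R := k)).lTensor H F)

/-- The twisted antipode `S_F(h) = U·S(h)·Uinv`. -/
def twistedAntipode (F : H ⊗[k] H) (Uinv : H) : H →ₗ[k] H :=
  LinearMap.mulLeft k (twistU F) ∘ₗ LinearMap.mulRight k Uinv ∘ₗ HopfAlgebra.antipode (R := k)

/-!
`Δ_F` is conjugation of `Δ` by the unit `F`, so it is an algebra map; it is counital because
`ε ⊗ id` and `id ⊗ ε` are algebra maps sending `F`, hence `F⁻¹`, to `1`. Applying `Δ_F` twice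
conjugates the coassociative `Δ²` by `Φ = (F ⊗ 1)(Δ ⊗ id)(F)`, resp. `Φ' = (1 ⊗ F)(id ⊗ Δ)(F)`,
and the cocycle identity says exactly that `Φ` and `Φ'` agree.

For the antipode, `x ↦ (w ↦ S(x₁) w x₂)` and `x ↦ (w ↦ x₁ w S(x₂))` are an anti-homomorphism and a
homomorphism `H ⊗ H → End H` under which `Δ(h)` sends `1` to `ε(h)`. This reduces both antipode
identities to `U V = 1` for `V = S(F⁻¹₁) F⁻¹₂`. That `V` is a two-sided inverse of `U` follows by
applying `a ⊗ b ⊗ c ↦ a S(b) c`, resp. `S(a) b S(c)`, to the cocycle identity rearranged as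
`(id ⊗ Δ)(F) · (Δ ⊗ id)(F⁻¹) = (1 ⊗ F⁻¹)(F ⊗ 1)`, resp.
`(Δ ⊗ id)(F) · (id ⊗ Δ)(F⁻¹) = (F⁻¹ ⊗ 1)(1 ⊗ F)`, whose left-hand sides these maps send to `1`
by the counit conditions.
-/

namespace DrinfeldTwist

open Coalgebra HopfAlgebra

theorem map_eq_one_of_mul_eq_one {M N F : Type*} [Monoid M] [Monoid N] [FunLike F M N]
    [MonoidHomClass F M N] (f : F) {a b : M} (ha : f a = 1) (hab : a * b = 1) : f b = 1 := by
  calc f b = f a * f b := by rw [ha, one_mul]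
    _ = 1 := by rw [← map_mul, hab, map_one]

section Bialgebra

variable {R A : Type*} [CommSemiring R] [Semiring A] [Bialgebra R A]

def comulLeft : A ⊗[R] A →ₐ[R] (A ⊗[R] A) ⊗[R] A :=
  Algebra.TensorProduct.map (Bialgebra.comulAlgHom R A) (AlgHom.id R A)

def comulRight : A ⊗[R] A →ₐ[R] A ⊗[R] (A ⊗[R] A) :=
  Algebra.TensorProduct.map (AlgHom.id R A) (Bialgebra.comulAlgHom R A)

def counitLeft : A ⊗[R] A →ₐ[R] A :=
  (Algebra.TensorProduct.lid R A).toAlgHom.comp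
    (Algebra.TensorProduct.map (Bialgebra.counitAlgHom R A) (AlgHom.id R A))

def counitRight : A ⊗[R] A →ₐ[R] A :=
  (Algebra.TensorProduct.rid R R A).toAlgHom.comp
    (Algebra.TensorProduct.map (AlgHom.id R A) (Bialgebra.counitAlgHom R A))

def IsTwoCocycle (F : A ⊗[R] A) : Prop :=
  (F ⊗ₜ[R] (1 : A)) * comulLeft F =
    (Algebra.TensorProduct.assoc R R R A A A).symm (((1 : A) ⊗ₜ[R] F) * comulRight F)

theorem counitLeft_apply (x : A ⊗[R] A) :
    counitLeft x = TensorProduct.lid R A (TensorProduct.map counit LinearMap.id x) := rfl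

theorem counitRight_apply (x : A ⊗[R] A) :
    counitRight x = TensorProduct.rid R A (TensorProduct.map LinearMap.id counit x) := rfl

theorem counitLeft_eq_one {F : A ⊗[R] A} (hF : TensorProduct.map counit LinearMap.id F = 1) :
    counitLeft F = 1 := by
  simp [counitLeft_apply, hF, Algebra.TensorProduct.one_def]

theorem counitRight_eq_one {F : A ⊗[R] A} (hF : TensorProduct.map LinearMap.id counit F = 1) :
    counitRight F = 1 := by
  simp [counitRight_apply, hF, Algebra.TensorProduct.one_def]

theorem counitLeft_comul (a : A) : counitLeft (comul (R := R) a) = a := by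
  rw [counitLeft_apply]
  exact congr(TensorProduct.lid R A $(rTensor_counit_comul a)).trans (by simp)

theorem counitRight_comul (a : A) : counitRight (comul (R := R) a) = a := by
  rw [counitRight_apply]
  exact congr(TensorProduct.rid R A $(lTensor_counit_comul a)).trans (by simp)

end Bialgebra

section HopfAlgebra

variable {R A : Type*} [CommSemiring R] [Semiring A] [HopfAlgebra R A]

def antipodeSandwich : A ⊗[R] A →ₗ[R] Module.End R A :=
  TensorProduct.lift ((LinearMap.mul R (Module.End R A)).compl₁₂
    (LinearMap.mul R A ∘ₗ antipode R) (LinearMap.mul R A).flip)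

def sandwichAntipode : A ⊗[R] A →ₗ[R] Module.End R A :=
  TensorProduct.lift ((LinearMap.mul R (Module.End R A)).compl₁₂
    (LinearMap.mul R A) ((LinearMap.mul R A).flip ∘ₗ antipode R))

@[simp]
theorem antipodeSandwich_tmul (a b w : A) :
    antipodeSandwich (a ⊗ₜ[R] b) w = antipode R a * w * b := by
  simp [antipodeSandwich, mul_assoc]

@[simp]
theorem sandwichAntipode_tmul (a b w : A) :
    sandwichAntipode (a ⊗ₜ[R] b) w = a * w * antipode R b := by
  simp [sandwichAntipode, mul_assoc]

theorem antipodeSandwich_mul (x y : A ⊗[R] A) :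
    antipodeSandwich (x * y) = antipodeSandwich y * antipodeSandwich x := by
  induction x using TensorProduct.induction_on with
  | zero => simp
  | add x x' hx hx' => simp [add_mul, mul_add, hx, hx']
  | tmul a b =>
    induction y using TensorProduct.induction_on with
    | zero => simp
    | add y y' hy hy' => simp [add_mul, mul_add, hy, hy']
    | tmul c d =>
      ext w
      simp [Algebra.TensorProduct.tmul_mul_tmul, antipode_mul_antidistrib, mul_assoc]

theorem sandwichAntipode_mul (x y : A ⊗[R] A) :
    sandwichAntipode (x * y) = sandwichAntipode x * sandwichAntipode y := by
  induction x using TensorProduct.induction_on with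
  | zero => simp
  | add x x' hx hx' => simp [add_mul, hx, hx']
  | tmul a b =>
    induction y using TensorProduct.induction_on with
    | zero => simp
    | add y y' hy hy' => simp [mul_add, hy, hy']
    | tmul c d =>
      ext w
      simp [Algebra.TensorProduct.tmul_mul_tmul, antipode_mul_antidistrib, mul_assoc]

@[simp]
theorem antipodeSandwich_one : antipodeSandwich (1 : A ⊗[R] A) = 1 := by
  ext w; simp [Algebra.TensorProduct.one_def]

@[simp]
theorem sandwichAntipode_one : sandwichAntipode (1 : A ⊗[R] A) = 1 := by
  ext w; simp [Algebra.TensorProduct.one_def]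

theorem antipodeSandwich_apply_one (x : A ⊗[R] A) :
    antipodeSandwich x 1 = LinearMap.mul' R A ((antipode R).rTensor A x) := by
  induction x using TensorProduct.induction_on with
  | zero => simp
  | add x x' hx hx' => simp [hx, hx']
  | tmul a b => simp

theorem sandwichAntipode_apply_one (x : A ⊗[R] A) :
    sandwichAntipode x 1 = LinearMap.mul' R A ((antipode R).lTensor A x) := by
  induction x using TensorProduct.induction_on with
  | zero => simp
  | add x x' hx hx' => simp [hx, hx']
  | tmul a b => simp

theorem antipodeSandwich_comul_one (a : A) :
    antipodeSandwich (comul (R := R) a) 1 = algebraMap R A (counit a) := by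
  rw [antipodeSandwich_apply_one, mul_antipode_rTensor_comul_apply]

theorem sandwichAntipode_comul_one (a : A) :
    sandwichAntipode (comul (R := R) a) 1 = algebraMap R A (counit a) := by
  rw [sandwichAntipode_apply_one, mul_antipode_lTensor_comul_apply]

def mulAntipodeMul : (A ⊗[R] A) ⊗[R] A →ₗ[R] A :=
  LinearMap.mul' R A ∘ₗ (LinearMap.mul' R A ∘ₗ (antipode R).lTensor A).rTensor A

def antipodeMulAntipode : (A ⊗[R] A) ⊗[R] A →ₗ[R] A :=
  LinearMap.mul' R A ∘ₗ
    TensorProduct.map (LinearMap.mul' R A ∘ₗ (antipode R).rTensor A) (antipode R)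

@[simp]
theorem mulAntipodeMul_tmul (a b c : A) :
    mulAntipodeMul ((a ⊗ₜ[R] b) ⊗ₜ[R] c) = a * antipode R b * c := by
  simp [mulAntipodeMul]

@[simp]
theorem antipodeMulAntipode_tmul (a b c : A) :
    antipodeMulAntipode ((a ⊗ₜ[R] b) ⊗ₜ[R] c) = antipode R a * b * antipode R c := by
  simp [antipodeMulAntipode]

theorem mulAntipodeMul_assoc_symm_mul (a d : A) (x y : A ⊗[R] A) :
    mulAntipodeMul ((Algebra.TensorProduct.assoc R R R A A A).symm (a ⊗ₜ x) * (y ⊗ₜ d)) =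
      a * sandwichAntipode y 1 * antipodeSandwich x 1 * d := by
  induction x using TensorProduct.induction_on with
  | zero => simp
  | add x x' hx hx' => simp [tmul_add, add_mul, mul_add, hx, hx']
  | tmul b c =>
    induction y using TensorProduct.induction_on with
    | zero => simp
    | add y y' hy hy' =>
      simp only [add_tmul, mul_add, add_mul, map_add, LinearMap.add_apply, hy, hy']
    | tmul p q =>
      simp [Algebra.TensorProduct.tmul_mul_tmul, antipode_mul_antidistrib, mul_assoc]

theorem antipodeMulAntipode_mul_assoc_symm (a d : A) (x y : A ⊗[R] A) :
    antipodeMulAntipode ((y ⊗ₜ d) * (Algebra.TensorProduct.assoc R R R A A A).symm (a ⊗ₜ x)) =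
      antipode R a * antipodeSandwich y 1 * sandwichAntipode x 1 * antipode R d := by
  induction x using TensorProduct.induction_on with
  | zero => simp
  | add x x' hx hx' => simp [tmul_add, add_mul, mul_add, hx, hx']
  | tmul b c =>
    induction y using TensorProduct.induction_on with
    | zero => simp
    | add y y' hy hy' =>
      simp only [add_tmul, mul_add, add_mul, map_add, LinearMap.add_apply, hy, hy']
    | tmul p q =>
      simp [Algebra.TensorProduct.tmul_mul_tmul, antipode_mul_antidistrib, mul_assoc]

theorem mulAntipodeMul_comulRight_mul_comulLeft (x y : A ⊗[R] A) :
    mulAntipodeMul ((Algebra.TensorProduct.assoc R R R A A A).symm (comulRight x) *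
      comulLeft y) = counitRight x * counitLeft y := by
  induction x using TensorProduct.induction_on with
  | zero => simp
  | add x x' hx hx' => simp [add_mul, hx, hx']
  | tmul a b =>
    induction y using TensorProduct.induction_on with
    | zero => simp
    | add y y' hy hy' => simp [mul_add, hy, hy']
    | tmul c d =>
      simp [comulRight, comulLeft, counitRight, counitLeft, mulAntipodeMul_assoc_symm_mul,
        sandwichAntipode_comul_one, antipodeSandwich_comul_one, Algebra.algebraMap_eq_smul_one,
        smul_smul, mul_comm]

theorem antipodeMulAntipode_comulLeft_mul_comulRight (x y : A ⊗[R] A) :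
    antipodeMulAntipode (comulLeft y *
      (Algebra.TensorProduct.assoc R R R A A A).symm (comulRight x)) =
      antipode R (counitRight x) * antipode R (counitLeft y) := by
  induction x using TensorProduct.induction_on with
  | zero => simp
  | add x x' hx hx' => simp [mul_add, add_mul, hx, hx']
  | tmul a b =>
    induction y using TensorProduct.induction_on with
    | zero => simp
    | add y y' hy hy' => simp [add_mul, mul_add, hy, hy']
    | tmul c d =>
      simp [comulRight, comulLeft, counitRight, counitLeft, antipodeMulAntipode_mul_assoc_symm,
        sandwichAntipode_comul_one, antipodeSandwich_comul_one, Algebra.algebraMap_eq_smul_one,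
        smul_smul, mul_comm]

end HopfAlgebra

section Twist

variable {F G : H ⊗[k] H}

theorem twistedComul_apply (h : H) :
    twistedComul F G h = F * comul h * G := by
  simp [twistedComul, mul_assoc]

theorem twistedComul_one (hFG : F * G = 1) : twistedComul F G 1 = 1 := by
  rw [twistedComul_apply, Bialgebra.comul_one, mul_one, hFG]

theorem twistedComul_mul (hGF : G * F = 1) (g h : H) :
    twistedComul F G (g * h) = twistedComul F G g * twistedComul F G h := by
  simp only [twistedComul_apply, Bialgebra.comul_mul, mul_assoc]
  rw [← mul_assoc G F, hGF, one_mul]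

theorem lid_map_counit_twistedComul (hFG : F * G = 1)
    (hF : TensorProduct.map counit LinearMap.id F = 1) (h : H) :
    TensorProduct.lid k H (TensorProduct.map counit LinearMap.id (twistedComul F G h)) = h := by
  have hF' := counitLeft_eq_one hF
  rw [← counitLeft_apply, twistedComul_apply, map_mul, map_mul, hF',
    map_eq_one_of_mul_eq_one _ hF' hFG, counitLeft_comul, one_mul, mul_one]

theorem rid_map_counit_twistedComul (hFG : F * G = 1)
    (hF : TensorProduct.map LinearMap.id counit F = 1) (h : H) :
    TensorProduct.rid k H (TensorProduct.map LinearMap.id counit (twistedComul F G h)) = h := by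
  have hF' := counitRight_eq_one hF
  rw [← counitRight_apply, twistedComul_apply, map_mul, map_mul, hF',
    map_eq_one_of_mul_eq_one _ hF' hFG, counitRight_comul, one_mul, mul_one]

theorem map_twistedComul_id (x : H ⊗[k] H) :
    TensorProduct.map (twistedComul F G) LinearMap.id x =
      (F ⊗ₜ[k] (1 : H)) * comulLeft x * (G ⊗ₜ[k] (1 : H)) := by
  induction x using TensorProduct.induction_on with
  | zero => simp
  | add x y hx hy => simp [hx, hy, mul_add, add_mul]
  | tmul a b => simp [twistedComul_apply, comulLeft, Algebra.TensorProduct.tmul_mul_tmul]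

theorem map_id_twistedComul (x : H ⊗[k] H) :
    TensorProduct.map LinearMap.id (twistedComul F G) x =
      ((1 : H) ⊗ₜ[k] F) * comulRight x * ((1 : H) ⊗ₜ[k] G) := by
  induction x using TensorProduct.induction_on with
  | zero => simp
  | add x y hx hy => simp [hx, hy, mul_add, add_mul]
  | tmul a b => simp [twistedComul_apply, comulRight, Algebra.TensorProduct.tmul_mul_tmul]

theorem twistedComul_coassoc (hFG : F * G = 1) (hGF : G * F = 1) (hc : IsTwoCocycle F) (h : H) :
    TensorProduct.assoc k H H H
        (TensorProduct.map (twistedComul F G) LinearMap.id (twistedComul F G h)) =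
      TensorProduct.map LinearMap.id (twistedComul F G) (twistedComul F G h) := by
  let α := Algebra.TensorProduct.assoc k k k H H H
  have hΦ : α ((F ⊗ₜ[k] (1 : H)) * comulLeft F) = ((1 : H) ⊗ₜ[k] F) * comulRight F :=
    (congrArg α hc).trans (α.apply_symm_apply _)
  have hΨΦ : (comulLeft G * (G ⊗ₜ[k] (1 : H))) * ((F ⊗ₜ[k] (1 : H)) * comulLeft F) = 1 := by
    rw [mul_assoc, ← mul_assoc (_ ⊗ₜ _), Algebra.TensorProduct.tmul_mul_tmul, hGF, mul_one,
      ← Algebra.TensorProduct.one_def, one_mul, ← map_mul, hGF, map_one]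
  have hΦΨ : (((1 : H) ⊗ₜ[k] F) * comulRight F) * (comulRight G * ((1 : H) ⊗ₜ[k] G)) = 1 := by
    rw [mul_assoc, ← mul_assoc (comulRight _), ← map_mul, hFG, map_one, one_mul,
      Algebra.TensorProduct.tmul_mul_tmul, hFG, mul_one, ← Algebra.TensorProduct.one_def]
  have hΨ : α (comulLeft G * (G ⊗ₜ[k] (1 : H))) = comulRight G * ((1 : H) ⊗ₜ[k] G) :=
    left_inv_eq_right_inv (by rw [← hΦ, ← map_mul, hΨΦ, map_one]) hΦΨ
  calc TensorProduct.assoc k H H H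
        (TensorProduct.map (twistedComul F G) LinearMap.id (twistedComul F G h))
      = α (((F ⊗ₜ[k] (1 : H)) * comulLeft F) * comulLeft (comul h) *
          (comulLeft G * (G ⊗ₜ[k] (1 : H)))) := by
        change α _ = α _
        rw [map_twistedComul_id, twistedComul_apply, map_mul comulLeft, map_mul comulLeft]
        simp only [mul_assoc]
    _ = (((1 : H) ⊗ₜ[k] F) * comulRight F) * comulRight (comul h) *
          (comulRight G * ((1 : H) ⊗ₜ[k] G)) := by
        rw [map_mul, map_mul, hΦ, hΨ]
        congr 2
        exact coassoc_apply h
    _ = _ := by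
        rw [map_id_twistedComul, twistedComul_apply, map_mul, map_mul]
        simp only [mul_assoc]

theorem twistU_eq_sandwichAntipode : twistU F = sandwichAntipode F 1 :=
  (sandwichAntipode_apply_one F).symm

theorem twistU_mul_antipodeSandwich (hFG : F * G = 1) (hGF : G * F = 1) (hc : IsTwoCocycle F)
    (hεl : TensorProduct.map counit LinearMap.id F = 1)
    (hεr : TensorProduct.map LinearMap.id counit F = 1) :
    twistU F * antipodeSandwich G 1 = 1 := by
  let α := (Algebra.TensorProduct.assoc k k k H H H).symm
  have hb : α ((1 : H) ⊗ₜ[k] G) * α ((1 : H) ⊗ₜ[k] F) = 1 := by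
    rw [← map_mul, Algebra.TensorProduct.tmul_mul_tmul, hGF, one_mul,
      ← Algebra.TensorProduct.one_def, map_one]
  have hc' : comulLeft F * comulLeft G = 1 := by
    rw [← map_mul, hFG, map_one]
  have key : α (comulRight F) * comulLeft G = α ((1 : H) ⊗ₜ[k] G) * (F ⊗ₜ[k] (1 : H)) :=
    calc _ = α ((1 : H) ⊗ₜ[k] G) * (α ((1 : H) ⊗ₜ[k] F) * α (comulRight F)) * comulLeft G := by
          rw [← mul_assoc, hb, one_mul]
      _ = _ := by rw [← map_mul, ← hc, mul_assoc, mul_assoc, hc', mul_one]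
  calc twistU F * antipodeSandwich G 1
      = mulAntipodeMul (α ((1 : H) ⊗ₜ[k] G) * (F ⊗ₜ[k] (1 : H))) := by
        rw [mulAntipodeMul_assoc_symm_mul, twistU_eq_sandwichAntipode, one_mul, mul_one]
    _ = 1 := by
        rw [← key, mulAntipodeMul_comulRight_mul_comulLeft, counitRight_eq_one hεr,
          map_eq_one_of_mul_eq_one _ (counitLeft_eq_one hεl) hFG, mul_one]

theorem antipodeSandwich_mul_twistU (hFG : F * G = 1) (hGF : G * F = 1) (hc : IsTwoCocycle F)
    (hεl : TensorProduct.map counit LinearMap.id F = 1)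
    (hεr : TensorProduct.map LinearMap.id counit F = 1) :
    antipodeSandwich G 1 * twistU F = 1 := by
  let α := (Algebra.TensorProduct.assoc k k k H H H).symm
  have ha : (G ⊗ₜ[k] (1 : H)) * (F ⊗ₜ[k] (1 : H)) = 1 := by
    rw [Algebra.TensorProduct.tmul_mul_tmul, hGF, one_mul, ← Algebra.TensorProduct.one_def]
  have hd : α (comulRight F) * α (comulRight G) = 1 := by
    rw [← map_mul, ← map_mul, hFG, map_one, map_one]
  have key : comulLeft F * α (comulRight G) = (G ⊗ₜ[k] (1 : H)) * α ((1 : H) ⊗ₜ[k] F) :=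
    calc _ = (G ⊗ₜ[k] (1 : H)) * ((F ⊗ₜ[k] (1 : H)) * comulLeft F) * α (comulRight G) := by
          rw [← mul_assoc, ha, one_mul]
      _ = _ := by rw [hc, map_mul, mul_assoc, mul_assoc, hd, mul_one]
  calc antipodeSandwich G 1 * twistU F
      = antipodeMulAntipode ((G ⊗ₜ[k] (1 : H)) * α ((1 : H) ⊗ₜ[k] F)) := by
        rw [antipodeMulAntipode_mul_assoc_symm, twistU_eq_sandwichAntipode, antipode_one,
          one_mul, mul_one]
    _ = 1 := by
        rw [← key, antipodeMulAntipode_comulLeft_mul_comulRight, counitLeft_eq_one hεl,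
          map_eq_one_of_mul_eq_one _ (counitRight_eq_one hεr) hFG, antipode_one, mul_one]

theorem mul'_map_twistedAntipode_id (x : H ⊗[k] H) (V : H) :
    LinearMap.mul' k H (TensorProduct.map (twistedAntipode F V) LinearMap.id x) =
      twistU F * antipodeSandwich x V := by
  induction x using TensorProduct.induction_on with
  | zero => simp
  | add x y hx hy => simp [hx, hy, mul_add]
  | tmul a b => simp [twistedAntipode, mul_assoc]

theorem mul'_map_id_twistedAntipode (x : H ⊗[k] H) (V : H) :
    LinearMap.mul' k H (TensorProduct.map LinearMap.id (twistedAntipode F V) x) =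
      sandwichAntipode x (twistU F) * V := by
  induction x using TensorProduct.induction_on with
  | zero => simp
  | add x y hx hy => simp [hx, hy, add_mul]
  | tmul a b => simp [twistedAntipode, mul_assoc]

theorem mul'_map_twistedAntipode_id_twistedComul (hGF : G * F = 1)
    (hU : twistU F * antipodeSandwich G 1 = 1) (h : H) :
    LinearMap.mul' k H (TensorProduct.map (twistedAntipode F (antipodeSandwich G 1))
      LinearMap.id (twistedComul F G h)) = algebraMap k H (counit h) := by
  have hV : antipodeSandwich F (antipodeSandwich G 1) = 1 := by
    rw [← Module.End.mul_apply, ← antipodeSandwich_mul, hGF, antipodeSandwich_one,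
      Module.End.one_apply]
  rw [mul'_map_twistedAntipode_id, twistedComul_apply, antipodeSandwich_mul, antipodeSandwich_mul]
  simp only [Module.End.mul_apply, hV, antipodeSandwich_comul_one, Algebra.algebraMap_eq_smul_one,
    map_smul, mul_smul_comm, hU]

theorem mul'_map_id_twistedAntipode_twistedComul (hGF : G * F = 1)
    (hU : twistU F * antipodeSandwich G 1 = 1) (h : H) :
    LinearMap.mul' k H (TensorProduct.map LinearMap.id
      (twistedAntipode F (antipodeSandwich G 1)) (twistedComul F G h)) =
      algebraMap k H (counit h) := by
  have hU' : sandwichAntipode G (twistU F) = 1 := by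
    rw [twistU_eq_sandwichAntipode, ← Module.End.mul_apply, ← sandwichAntipode_mul, hGF,
      sandwichAntipode_one, Module.End.one_apply]
  rw [mul'_map_id_twistedAntipode, twistedComul_apply, sandwichAntipode_mul, sandwichAntipode_mul]
  simp only [Module.End.mul_apply, hU', sandwichAntipode_comul_one, Algebra.algebraMap_eq_smul_one,
    map_smul]
  rw [← twistU_eq_sandwichAntipode, smul_mul_assoc, hU]

end Twist

end DrinfeldTwist

theorem twisted_hopfAlgebra (F Finv : H ⊗[k] H) (hF : IsCocycle k H F Finv) :
    (∀ h : H,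
      TensorProduct.assoc k H H H
        (TensorProduct.map (twistedComul F Finv) LinearMap.id (twistedComul F Finv h)) =
      TensorProduct.map LinearMap.id (twistedComul F Finv) (twistedComul F Finv h)) ∧
    (∀ h : H,
      TensorProduct.lid k H
        (TensorProduct.map Coalgebra.counit LinearMap.id (twistedComul F Finv h)) = h) ∧
    (∀ h : H,
      TensorProduct.rid k H
        (TensorProduct.map LinearMap.id Coalgebra.counit (twistedComul F Finv h)) = h) ∧
    (twistedComul F Finv (1 : H) = 1) ∧
    (∀ g h : H, twistedComul F Finv (g * h) = twistedComul F Finv g * twistedComul F Finv h) ∧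
    (∃ Uinv : H, twistU F * Uinv = 1 ∧ Uinv * twistU F = 1 ∧
      (∀ h : H,
        LinearMap.mul' k H
          (TensorProduct.map (twistedAntipode F Uinv) LinearMap.id (twistedComul F Finv h)) =
        algebraMap k H (Coalgebra.counit h)) ∧
      (∀ h : H,
        LinearMap.mul' k H
          (TensorProduct.map LinearMap.id (twistedAntipode F Uinv) (twistedComul F Finv h)) =
        algebraMap k H (Coalgebra.counit h))) := by
  open DrinfeldTwist in
  obtain ⟨hFG, hGF, hc, hεl, hεr⟩ := hF
  have hU := twistU_mul_antipodeSandwich hFG hGF hc hεl hεr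
  exact ⟨twistedComul_coassoc hFG hGF hc,
    lid_map_counit_twistedComul hFG hεl,
    rid_map_counit_twistedComul hFG hεr,
    twistedComul_one hFG,
    twistedComul_mul hGF,
    _, hU, antipodeSandwich_mul_twistU hFG hGF hc hεl hεr,
    mul'_map_twistedAntipode_id_twistedComul hGF hU,
    mul'_map_id_twistedAntipode_twistedComul hGF hU⟩

end
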